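/- Let S ⊆ {1,2,…} be countable with probability measure μ and symmetric kernel κ : S × S → (0,∞) satisfying ∫_S e^{a ψ(x)} dμ(x) < ∞ for some a > 0 where ψ(x) = (∑_{y∈S} κ(x,y)² μ(y))^{1/2}, and κ(x,y) ≤ c₁·T_κ[1](x)·T_κ[1](y) for all x,y and some c₁ > 0. For 0 < q < a/4 and c ≥ 1 let μ_q(x) = m_q·e^{q·T_κ[1](x)}·μ(x) with m_q = (∑_{x∈S} e^{q·T_κ[1](x)} μ(x))^{−1}, and define T_{cκ,μ_q}[f](x) = ∑_{y∈S} c·κ(x,y) f(y) μ_q(y). Then ‖T_{cκ,μ_q}‖_HS < ∞, ‖T_{cκ,μ_q} − T_κ‖_HS → 0 as c → 1 and q → 0, and consequently ‖T_{cκ,μ_q}‖ → ‖T_κ‖ as c → 1 and q → 0. -/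

import Mathlib

/-!
By Cauchy–Schwarz `T_κ[1] ≤ ψ`, so `κ(x,y) ≤ c₁ ψ(x) ψ(y) ≤ C g(x) g(y)` with `g = e^{aψ/4}`,
using `t ≤ s⁻¹ e^{st}`. As `m_q ≤ 1` and `q ≤ a/4`, the density `ρ_q = m_q e^{q T_κ[1]}` of `μ_q`
is at most `g` as well. Hence every kernel in sight (`c κ(x,y) ρ_q(y)`, `c κ(x,y) √ρ_q(x) √ρ_q(y)`
and their differences with `κ`) is dominated by a multiple of `g(x)² g(y)²`, which lies in
`L²(μ × μ)` because `∫ e^{aψ} dμ < ∞`; dominated convergence gives the Hilbert–Schmidt statements.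
Multiplication by `√ρ_q` identifies `T_{cκ,μ_q}` with the operator on `L²(μ)` of kernel
`c κ(x,y) √ρ_q(x) √ρ_q(y)`, and the operator norm is `1`-Lipschitz for the Hilbert–Schmidt distance
(`‖·‖ ≤ ‖·‖_HS`), which gives the convergence of the operator norms.
-/

open MeasureTheory Filter
open scoped ENNReal

/-- The `L²(ν)` operator norm of the integral operator with kernel `κ`. -/
noncomputable def opNorm {S : Type*} [MeasurableSpace S] (ν : Measure S)
    (κ : S → S → ℝ) : ℝ≥0∞ :=
  ⨆ (f : S → ℝ≥0∞) (_ : Measurable f) (_ : (∫⁻ x, f x ^ 2 ∂ν) ^ ((1 : ℝ) / 2) ≤ 1),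
    (∫⁻ x, (∫⁻ y, ENNReal.ofReal (κ x y) * f y ∂ν) ^ 2 ∂ν) ^ ((1 : ℝ) / 2)

/-- The Hilbert–Schmidt norm of the integral operator with kernel `κ` on `L²(ν)`. -/
noncomputable def hsNorm {S : Type*} [MeasurableSpace S] (ν : Measure S)
    (κ : S → S → ℝ) : ℝ≥0∞ :=
  (∫⁻ x, ∫⁻ y, ENNReal.ofReal (κ x y) ^ 2 ∂ν ∂ν) ^ ((1 : ℝ) / 2)

open Topology

theorem le_inv_mul_exp {s : ℝ} (hs : 0 < s) (t : ℝ) : t ≤ s⁻¹ * Real.exp (s * t) := by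
  rw [le_inv_mul_iff₀ hs]
  linarith [Real.add_one_le_exp (s * t)]

theorem le_mul_exp_mul_exp {k c t t' u u' s : ℝ} (hs : 0 < s) (hc : 0 ≤ c) (ht' : 0 ≤ t')
    (htu : t ≤ u) (htu' : t' ≤ u') (hk : k ≤ c * t * t') :
    k ≤ c * s⁻¹ ^ 2 * Real.exp (s * u) * Real.exp (s * u') := by
  calc k ≤ c * t * t' := hk
    _ ≤ c * (s⁻¹ * Real.exp (s * u)) * (s⁻¹ * Real.exp (s * u')) := by
        gcongr
        exacts [htu.trans (le_inv_mul_exp hs u), htu'.trans (le_inv_mul_exp hs u')]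
    _ = c * s⁻¹ ^ 2 * Real.exp (s * u) * Real.exp (s * u') := by ring

theorem sqrt_mul_le_of_le {m e g : ℝ} (hm : m ≤ 1) (he₀ : 0 ≤ e) (he : e ≤ g) (hg : 1 ≤ g) :
    √(m * e) ≤ g := by
  rw [Real.sqrt_le_left (by linarith)]
  nlinarith [mul_le_mul_of_nonneg_right hm he₀]

theorem mul_mul_mul_le_mul_sq_mul_sq {c k C g g' r r' : ℝ} (hc : 0 ≤ c) (hk : 0 ≤ k)
    (hkC : k ≤ C * g * g') (hr : r ∈ Set.Icc 0 g) (hr' : r' ∈ Set.Icc 0 g') :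
    c * k * r * r' ≤ c * C * g ^ 2 * g' ^ 2 := by
  obtain ⟨hr0, hrg⟩ := hr
  obtain ⟨hr'0, hr'g⟩ := hr'
  calc c * k * r * r' ≤ c * (C * g * g') * g * g' := by
        have := mul_nonneg hc (hk.trans hkC)
        gcongr
        exact mul_nonneg this (hr0.trans hrg)
    _ = c * C * g ^ 2 * g' ^ 2 := by ring

theorem le_mul_sq_mul_sq {k C g g' : ℝ} (hk : 0 ≤ k) (hkC : k ≤ C * g * g') (hg : 1 ≤ g)
    (hg' : 1 ≤ g') : k ≤ C * g ^ 2 * g' ^ 2 := by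
  have hgg' : 1 ≤ g * g' := one_le_mul_of_one_le_of_one_le hg hg'
  have hC : 0 ≤ C := by
    by_contra! hC
    nlinarith
  calc k ≤ C * (g * g') := by rwa [← mul_assoc]
    _ ≤ C * (g * g') ^ 2 := by gcongr; nlinarith
    _ = C * g ^ 2 * g' ^ 2 := by ring

theorem abs_mul_mul_mul_sub_le {c M k C g g' r r' : ℝ} (hc : c ∈ Set.Icc 1 M) (hk : 0 ≤ k)
    (hkC : k ≤ C * g * g') (hg : 1 ≤ g) (hg' : 1 ≤ g') (hr : r ∈ Set.Icc 0 g)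
    (hr' : r' ∈ Set.Icc 0 g') :
    |c * k * r * r' - k| ≤ M * C * g ^ 2 * g' ^ 2 := by
  obtain ⟨hc1, hcM⟩ := hc
  have hk' := le_mul_sq_mul_sq hk hkC hg hg'
  have hCg : 0 ≤ C * g ^ 2 * g' ^ 2 := hk.trans hk'
  refine abs_sub_le_of_nonneg_of_le (by have := hr.1; have := hr'.1; positivity) ?_ hk ?_
  · calc c * k * r * r' ≤ c * C * g ^ 2 * g' ^ 2 :=
          mul_mul_mul_le_mul_sq_mul_sq (by linarith) hk hkC hr hr'
      _ = c * (C * g ^ 2 * g' ^ 2) := by ring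
      _ ≤ M * (C * g ^ 2 * g' ^ 2) := mul_le_mul_of_nonneg_right hcM hCg
      _ = M * C * g ^ 2 * g' ^ 2 := by ring
  · calc k ≤ C * g ^ 2 * g' ^ 2 := hk'
      _ ≤ M * (C * g ^ 2 * g' ^ 2) := le_mul_of_one_le_left hCg (hc1.trans hcM)
      _ = M * C * g ^ 2 * g' ^ 2 := by ring

theorem integral_le_sqrt_integral_sq {Ω : Type*} [MeasurableSpace Ω] {μ : Measure Ω}
    [IsProbabilityMeasure μ] {f : Ω → ℝ} (hf : MemLp f 2 μ) :
    ∫ x, f x ∂μ ≤ √(∫ x, f x ^ 2 ∂μ) := by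
  have hvar := ProbabilityTheory.variance_nonneg f μ
  rw [ProbabilityTheory.variance_eq_sub hf] at hvar
  exact (le_abs_self _).trans (Real.abs_le_sqrt (by simpa using hvar))

theorem tendsto_exp_mul_nhdsGT_zero (t : ℝ) :
    Tendsto (fun q : ℝ => Real.exp (q * t)) (𝓝[>] 0) (𝓝 1) := by
  simpa using ((continuous_id.mul continuous_const).rexp.tendsto 0).mono_left nhdsWithin_le_nhds

section Tilt

variable {Ω : Type*} [MeasurableSpace Ω] {μ : Measure Ω} {T : Ω → ℝ}

theorem integrable_exp_of_le {U : Ω → ℝ} (hTm : AEStronglyMeasurable T μ)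
    (hU : Integrable (fun x => Real.exp (U x)) μ) (hTU : ∀ x, T x ≤ U x) :
    Integrable (fun x => Real.exp (T x)) μ := by
  refine hU.mono' (Real.continuous_exp.comp_aestronglyMeasurable hTm) (.of_forall fun x => ?_)
  rw [Real.norm_eq_abs, abs_of_pos (Real.exp_pos _)]
  exact Real.exp_le_exp.2 (hTU x)

variable [IsProbabilityMeasure μ] {a : ℝ}

theorem inv_integral_exp_mul_mem_Ioc (hTm : AEStronglyMeasurable T μ) (hT : ∀ x, 0 ≤ T x)
    (hint : Integrable (fun x => Real.exp (a * T x)) μ) {q : ℝ} (hq : q ∈ Set.Icc 0 a) :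
    (∫ x, Real.exp (q * T x) ∂μ)⁻¹ ∈ Set.Ioc 0 1 := by
  have hqT : Integrable (fun x => Real.exp (q * T x)) μ := integrable_exp_of_le
    (hTm.const_mul q) hint fun x => mul_le_mul_of_nonneg_right hq.2 (hT x)
  have hZ : 1 ≤ ∫ x, Real.exp (q * T x) ∂μ := by
    simpa using integral_mono (integrable_const 1) hqT
      fun x => Real.one_le_exp (mul_nonneg hq.1 (hT x))
  exact ⟨inv_pos.2 (by linarith), inv_le_one_of_one_le₀ hZ⟩

theorem tendsto_inv_integral_exp_mul_nhdsGT_zero (hTm : AEStronglyMeasurable T μ)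
    (hT : ∀ x, 0 ≤ T x) (ha : 0 < a) (hint : Integrable (fun x => Real.exp (a * T x)) μ) :
    Tendsto (fun q => (∫ x, Real.exp (q * T x) ∂μ)⁻¹) (𝓝[>] 0) (𝓝 1) := by
  have hZ : Tendsto (fun q => ∫ x, Real.exp (q * T x) ∂μ) (𝓝[>] 0) (𝓝 1) := by
    simpa using tendsto_integral_filter_of_dominated_convergence (fun x => Real.exp (a * T x))
      (.of_forall fun q => Real.continuous_exp.comp_aestronglyMeasurable (hTm.const_mul q))
      (eventually_of_mem (Ioo_mem_nhdsGT ha) fun q hq => ae_of_all _ fun x => by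
        rw [Real.norm_eq_abs, abs_of_pos (Real.exp_pos _)]
        exact Real.exp_le_exp.2 (mul_le_mul_of_nonneg_right hq.2.le (hT x)))
      hint (.of_forall fun x => tendsto_exp_mul_nhdsGT_zero (T x))
  simpa using hZ.inv₀ one_ne_zero

end Tilt

namespace ENNReal

variable {α : Type*} [MeasurableSpace α] {μ : Measure α}

theorem lintegral_mul_le_sqrt_mul_sqrt {f g : α → ℝ≥0∞} (hf : AEMeasurable f μ)
    (hg : AEMeasurable g μ) :
    ∫⁻ x, f x * g x ∂μ ≤
      (∫⁻ x, f x ^ 2 ∂μ) ^ ((1 : ℝ) / 2) * (∫⁻ x, g x ^ 2 ∂μ) ^ ((1 : ℝ) / 2) := by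
  simpa only [rpow_two, Pi.mul_apply] using
    lintegral_mul_le_Lp_mul_Lq μ Real.HolderConjugate.two_two hf hg

theorem sqrt_lintegral_add_sq_le {f g : α → ℝ≥0∞} (hf : AEMeasurable f μ)
    (hg : AEMeasurable g μ) :
    (∫⁻ x, (f x + g x) ^ 2 ∂μ) ^ ((1 : ℝ) / 2) ≤
      (∫⁻ x, f x ^ 2 ∂μ) ^ ((1 : ℝ) / 2) + (∫⁻ x, g x ^ 2 ∂μ) ^ ((1 : ℝ) / 2) := by
  simpa only [rpow_two, Pi.add_apply] using lintegral_Lp_add_le hf hg one_le_two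

theorem rpow_half_sq (x : ℝ≥0∞) : (x ^ ((1 : ℝ) / 2)) ^ 2 = x := by
  rw [← rpow_natCast, ← rpow_mul]
  norm_num

theorem ofReal_sqrt_mul_self {r : ℝ} (hr : 0 ≤ r) :
    ENNReal.ofReal √r * ENNReal.ofReal √r = ENNReal.ofReal r := by
  rw [← ENNReal.ofReal_mul (Real.sqrt_nonneg _), Real.mul_self_sqrt hr]

theorem ofReal_mul_sqrt_mul_sqrt (k r t : ℝ) :
    ENNReal.ofReal (k * √r * √t) = ENNReal.ofReal k * ENNReal.ofReal √r * ENNReal.ofReal √t := by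
  rw [ENNReal.ofReal_mul' (Real.sqrt_nonneg _), ENNReal.ofReal_mul' (Real.sqrt_nonneg _)]

theorem ofReal_sq_le_of_abs_le {u M b b' : ℝ} (h : |u| ≤ M * b * b') :
    ENNReal.ofReal (u ^ 2) ≤
      ENNReal.ofReal (M ^ 2) * ENNReal.ofReal (b ^ 2) * ENNReal.ofReal (b' ^ 2) := by
  rw [← ENNReal.ofReal_mul (sq_nonneg _), ← ENNReal.ofReal_mul (by positivity), ← sq_abs u]
  refine ENNReal.ofReal_le_ofReal ?_
  calc |u| ^ 2 ≤ (M * b * b') ^ 2 := pow_le_pow_left₀ (abs_nonneg u) h 2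
    _ = M ^ 2 * b ^ 2 * b' ^ 2 := by ring

end ENNReal

/-- `‖T_K − T_L‖_HS` in `L²(μ × μ)`; unlike `hsNorm`, it does not truncate negative values. -/
noncomputable def hsDist {S : Type*} [MeasurableSpace S] (μ : Measure S) (K L : S → S → ℝ) :
    ℝ≥0∞ :=
  (∫⁻ x, ∫⁻ y, ENNReal.ofReal ((K x y - L x y) ^ 2) ∂μ ∂μ) ^ ((1 : ℝ) / 2)

theorem hsDist_comm {S : Type*} [MeasurableSpace S] (μ : Measure S) (K L : S → S → ℝ) :
    hsDist μ K L = hsDist μ L K := by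
  simp only [hsDist, sub_sq_comm]

theorem hsNorm_abs_sub {S : Type*} [MeasurableSpace S] (μ : Measure S) (K L : S → S → ℝ) :
    hsNorm μ (fun x y => |K x y - L x y|) = hsDist μ K L := by
  simp only [hsNorm, hsDist, ← ENNReal.ofReal_pow (abs_nonneg _), sq_abs]

section Kernel

variable {S : Type*} [MeasurableSpace S] [Countable S] [MeasurableSingletonClass S]
  {μ : Measure S}

theorem lintegral_lintegral_ofReal_sq_le {K : S → S → ℝ} {M : ℝ} {B : S → ℝ}
    (h : ∀ x y, |K x y| ≤ M * B x * B y) :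
    ∫⁻ x, ∫⁻ y, ENNReal.ofReal (K x y ^ 2) ∂μ ∂μ ≤
      ENNReal.ofReal (M ^ 2) * (∫⁻ x, ENNReal.ofReal (B x ^ 2) ∂μ) ^ 2 := by
  calc ∫⁻ x, ∫⁻ y, ENNReal.ofReal (K x y ^ 2) ∂μ ∂μ
      ≤ ∫⁻ x, ∫⁻ y, ENNReal.ofReal (M ^ 2) * ENNReal.ofReal (B x ^ 2)
          * ENNReal.ofReal (B y ^ 2) ∂μ ∂μ :=
        lintegral_mono fun x => lintegral_mono fun y => ENNReal.ofReal_sq_le_of_abs_le (h x y)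
    _ = ENNReal.ofReal (M ^ 2) * (∫⁻ x, ENNReal.ofReal (B x ^ 2) ∂μ) ^ 2 := by
        simp only [lintegral_const_mul _ (measurable_of_countable _),
          lintegral_mul_const _ (measurable_of_countable _)]
        ring

theorem hsNorm_lt_top_of_abs_le {K : S → S → ℝ} {M : ℝ} {B : S → ℝ}
    (h : ∀ x y, |K x y| ≤ M * B x * B y) (hB : ∫⁻ x, ENNReal.ofReal (B x ^ 2) ∂μ ≠ ⊤) :
    hsNorm μ K < ⊤ := by
  have hK : ∀ x y, ENNReal.ofReal (K x y) ^ 2 ≤ ENNReal.ofReal (K x y ^ 2) := fun x y => by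
    rw [← sq_abs (K x y), ENNReal.ofReal_pow (abs_nonneg _)]
    gcongr
    exact le_abs_self _
  refine ENNReal.rpow_lt_top_of_nonneg (by norm_num) (ne_top_of_le_ne_top ?_
    ((lintegral_mono fun x => lintegral_mono fun y => hK x y).trans
      (lintegral_lintegral_ofReal_sq_le h)))
  exact ENNReal.mul_ne_top ENNReal.ofReal_ne_top (ENNReal.pow_ne_top hB)

theorem opNorm_le_opNorm_add {K L E : S → S → ℝ} (h : ∀ x y, K x y ≤ L x y + E x y) :
    opNorm μ K ≤ opNorm μ L + opNorm μ E := by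
  refine iSup₂_le fun f hf => iSup_le fun hf₁ => ?_
  have hle : ∀ N : S → S → ℝ,
      (∫⁻ x, (∫⁻ y, ENNReal.ofReal (N x y) * f y ∂μ) ^ 2 ∂μ) ^ ((1 : ℝ) / 2) ≤ opNorm μ N :=
    fun N => le_iSup₂_of_le f hf (le_iSup_of_le hf₁ le_rfl)
  calc (∫⁻ x, (∫⁻ y, ENNReal.ofReal (K x y) * f y ∂μ) ^ 2 ∂μ) ^ ((1 : ℝ) / 2)
      ≤ (∫⁻ x, ((∫⁻ y, ENNReal.ofReal (L x y) * f y ∂μ)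
          + ∫⁻ y, ENNReal.ofReal (E x y) * f y ∂μ) ^ 2 ∂μ) ^ ((1 : ℝ) / 2) := by
        gcongr with x
        rw [← lintegral_add_left (measurable_of_countable _)]
        gcongr with y
        rw [← add_mul]
        gcongr
        exact (ENNReal.ofReal_le_ofReal (h x y)).trans ENNReal.ofReal_add_le
    _ ≤ opNorm μ L + opNorm μ E :=
        (ENNReal.sqrt_lintegral_add_sq_le (measurable_of_countable _).aemeasurable
          (measurable_of_countable _).aemeasurable).trans (add_le_add (hle L) (hle E))

theorem opNorm_le_hsNorm (K : S → S → ℝ) : opNorm μ K ≤ hsNorm μ K := by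
  refine iSup₂_le fun f hf => iSup_le fun hf₁ => ?_
  unfold hsNorm
  gcongr with x
  calc (∫⁻ y, ENNReal.ofReal (K x y) * f y ∂μ) ^ 2
      ≤ ((∫⁻ y, ENNReal.ofReal (K x y) ^ 2 ∂μ) ^ ((1 : ℝ) / 2) * 1) ^ 2 := by
        gcongr
        exact (ENNReal.lintegral_mul_le_sqrt_mul_sqrt (measurable_of_countable _).aemeasurable
          hf.aemeasurable).trans (by gcongr)
    _ = ∫⁻ y, ENNReal.ofReal (K x y) ^ 2 ∂μ := by rw [mul_one, ENNReal.rpow_half_sq]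

theorem opNorm_le_opNorm_add_hsDist (K L : S → S → ℝ) :
    opNorm μ K ≤ opNorm μ L + hsDist μ K L := by
  calc opNorm μ K ≤ opNorm μ L + opNorm μ (fun x y => |K x y - L x y|) := by
        refine opNorm_le_opNorm_add fun x y => ?_
        linarith [le_abs_self (K x y - L x y)]
    _ ≤ opNorm μ L + hsDist μ K L := by
        rw [← hsNorm_abs_sub]
        gcongr
        exact opNorm_le_hsNorm _

theorem tendsto_opNorm_of_tendsto_hsDist {ι : Type*} {l : Filter ι} {K : ι → S → S → ℝ}
    {K₀ : S → S → ℝ} (h₀ : opNorm μ K₀ ≠ ⊤) (h : Tendsto (fun i => hsDist μ (K i) K₀) l (𝓝 0)) :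
    Tendsto (fun i => opNorm μ (K i)) l (𝓝 (opNorm μ K₀)) := by
  have lower : Tendsto (fun i => opNorm μ K₀ - hsDist μ (K i) K₀) l (𝓝 (opNorm μ K₀)) := by
    simpa using ENNReal.Tendsto.sub tendsto_const_nhds h (Or.inl h₀)
  have upper : Tendsto (fun i => opNorm μ K₀ + hsDist μ (K i) K₀) l (𝓝 (opNorm μ K₀)) := by
    simpa using tendsto_const_nhds.add h
  refine tendsto_of_tendsto_of_tendsto_of_le_of_le lower upper (fun i => ?_) fun i => ?_
  · rw [tsub_le_iff_right, hsDist_comm]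
    exact opNorm_le_opNorm_add_hsDist _ _
  · exact opNorm_le_opNorm_add_hsDist _ _

theorem tendsto_hsDist_zero_of_dominated {ι : Type*} {l : Filter ι} [l.IsCountablyGenerated]
    {K : ι → S → S → ℝ} {K₀ : S → S → ℝ} {M : ℝ} {B : S → ℝ}
    (hB : ∫⁻ x, ENNReal.ofReal (B x ^ 2) ∂μ ≠ ⊤)
    (hdom : ∀ᶠ i in l, ∀ x y, |K i x y - K₀ x y| ≤ M * B x * B y)
    (hlim : ∀ x y, Tendsto (fun i => K i x y) l (𝓝 (K₀ x y))) :
    Tendsto (fun i => hsDist μ (K i) K₀) l (𝓝 0) := by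
  set b : S → ℝ≥0∞ := fun x => ENNReal.ofReal (B x ^ 2)
  set C : ℝ≥0∞ := ENNReal.ofReal (M ^ 2)
  have hCb : ∀ x, C * b x ≠ ⊤ := fun x => ENNReal.mul_ne_top ENNReal.ofReal_ne_top
    ENNReal.ofReal_ne_top
  have hpt : ∀ x y, Tendsto (fun i => ENNReal.ofReal ((K i x y - K₀ x y) ^ 2)) l (𝓝 0) := by
    intro x y
    have := ((hlim x y).sub_const (K₀ x y)).pow 2
    simpa [Function.comp_def] using (ENNReal.continuous_ofReal.tendsto _).comp this
  have hinner : ∀ x, Tendsto (fun i => ∫⁻ y, ENNReal.ofReal ((K i x y - K₀ x y) ^ 2) ∂μ) l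
      (𝓝 0) := by
    intro x
    simpa using tendsto_lintegral_filter_of_dominated_convergence (fun y => C * b x * b y)
      (.of_forall fun i => measurable_of_countable _)
      (hdom.mono fun i hi => .of_forall fun y => ENNReal.ofReal_sq_le_of_abs_le (hi x y))
      (by rw [lintegral_const_mul' _ _ (hCb x)]; exact ENNReal.mul_ne_top (hCb x) hB)
      (.of_forall (hpt x))
  have houter := tendsto_lintegral_filter_of_dominated_convergence (μ := μ)
      (fun x => C * b x * ∫⁻ y, b y ∂μ) (.of_forall fun i => measurable_of_countable _)
      (hdom.mono fun i hi => .of_forall fun x => (lintegral_mono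
        fun y => ENNReal.ofReal_sq_le_of_abs_le (hi x y)).trans_eq
          (lintegral_const_mul' _ _ (hCb x)))
      (by
        rw [lintegral_mul_const _ (measurable_of_countable _),
          lintegral_const_mul' _ _ ENNReal.ofReal_ne_top]
        exact ENNReal.mul_ne_top (ENNReal.mul_ne_top ENNReal.ofReal_ne_top hB) hB)
      (.of_forall hinner)
  rw [lintegral_zero] at houter
  simpa [hsDist, Function.comp_def] using
    ((ENNReal.continuous_rpow_const (y := (1 : ℝ) / 2)).tendsto 0).comp houter

theorem lintegral_withDensity_ofReal {ρ : S → ℝ} (g : S → ℝ≥0∞) :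
    ∫⁻ x, g x ∂(μ.withDensity fun x => ENNReal.ofReal (ρ x)) =
      ∫⁻ x, ENNReal.ofReal (ρ x) * g x ∂μ :=
  lintegral_withDensity_eq_lintegral_mul μ (measurable_of_countable _) (measurable_of_countable g)

theorem hsNorm_withDensity (K : S → S → ℝ) {ρ : S → ℝ} (hρ : ∀ x, 0 ≤ ρ x) :
    hsNorm (μ.withDensity fun x => ENNReal.ofReal (ρ x)) K =
      hsNorm μ (fun x y => K x y * √(ρ x) * √(ρ y)) := by
  rw [hsNorm, hsNorm, lintegral_withDensity_ofReal]
  congr 1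
  refine lintegral_congr fun x => ?_
  rw [lintegral_withDensity_ofReal, ← lintegral_const_mul' _ _ ENNReal.ofReal_ne_top]
  refine lintegral_congr fun y => ?_
  rw [ENNReal.ofReal_mul_sqrt_mul_sqrt, ← ENNReal.ofReal_sqrt_mul_self (hρ x),
    ← ENNReal.ofReal_sqrt_mul_self (hρ y)]
  ring

/-- Multiplication by `√ρ` is an isometry from `L²(ρ μ)` onto `L²(μ)` that conjugates the
two integral operators. -/
theorem opNorm_withDensity (K : S → S → ℝ) {ρ : S → ℝ} (hρ : ∀ x, 0 < ρ x) :
    opNorm (μ.withDensity fun x => ENNReal.ofReal (ρ x)) K =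
      opNorm μ (fun x y => K x y * √(ρ x) * √(ρ y)) := by
  set s : S → ℝ≥0∞ := fun x => ENNReal.ofReal √(ρ x)
  have hss : ∀ x, s x * s x = ENNReal.ofReal (ρ x) := fun x =>
    ENNReal.ofReal_sqrt_mul_self (hρ x).le
  have hnorm : ∀ f : S → ℝ≥0∞,
      ∫⁻ x, f x ^ 2 ∂(μ.withDensity fun x => ENNReal.ofReal (ρ x)) =
        ∫⁻ x, (f x * s x) ^ 2 ∂μ := fun f => by
    rw [lintegral_withDensity_ofReal]
    refine lintegral_congr fun x => ?_
    rw [← hss]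
    ring
  have hval : ∀ f : S → ℝ≥0∞,
      ∫⁻ x, (∫⁻ y, ENNReal.ofReal (K x y) * f y
          ∂(μ.withDensity fun x => ENNReal.ofReal (ρ x))) ^ 2
        ∂(μ.withDensity fun x => ENNReal.ofReal (ρ x)) =
      ∫⁻ x, (∫⁻ y, ENNReal.ofReal (K x y * √(ρ x) * √(ρ y)) * (f y * s y) ∂μ) ^ 2 ∂μ :=
        fun f => by
    rw [lintegral_withDensity_ofReal]
    refine lintegral_congr fun x => ?_
    have hinner : ∫⁻ y, ENNReal.ofReal (K x y * √(ρ x) * √(ρ y)) * (f y * s y) ∂μ =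
        s x * ∫⁻ y, ENNReal.ofReal (K x y) * f y
          ∂(μ.withDensity fun x => ENNReal.ofReal (ρ x)) := by
      rw [lintegral_withDensity_ofReal, ← lintegral_const_mul' _ _ ENNReal.ofReal_ne_top]
      refine lintegral_congr fun y => ?_
      rw [ENNReal.ofReal_mul_sqrt_mul_sqrt, ← hss]
      ring
    rw [hinner, ← hss]
    ring
  have hs : ∀ x, (s x)⁻¹ * s x = 1 := fun x => ENNReal.inv_mul_cancel
    (by simpa [s] using hρ x) ENNReal.ofReal_ne_top
  apply le_antisymm
  · refine iSup₂_le fun f _ => iSup_le fun hf₁ => ?_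
    rw [hnorm] at hf₁
    rw [hval]
    exact le_iSup₂_of_le (fun x => f x * s x) (measurable_of_countable _)
      (le_iSup_of_le hf₁ le_rfl)
  · refine iSup₂_le fun g _ => iSup_le fun hg₁ => ?_
    have hg : ∀ x, g x * (s x)⁻¹ * s x = g x := fun x => by rw [mul_assoc, hs, mul_one]
    refine le_iSup₂_of_le (fun x => g x * (s x)⁻¹) (measurable_of_countable _)
      (le_iSup_of_le (by simpa only [hnorm, hg] using hg₁) ?_)
    simp only [hval, hg, le_rfl]

variable {κ : S → S → ℝ} {g : S → ℝ} {C : ℝ}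

theorem hsNorm_withDensity_lt_top (hκ : ∀ x y, 0 ≤ κ x y) (hκg : ∀ x y, κ x y ≤ C * g x * g y)
    (hg4 : ∫⁻ x, ENNReal.ofReal ((g x ^ 2) ^ 2) ∂μ ≠ ⊤) {c : ℝ} (hc : 0 ≤ c) {ρ : S → ℝ}
    (hρ : ∀ x, √(ρ x) ∈ Set.Icc 0 (g x)) (hρ₀ : ∀ x, 0 ≤ ρ x) :
    hsNorm (μ.withDensity fun x => ENNReal.ofReal (ρ x)) (fun x y => c * κ x y) < ⊤ := by
  rw [hsNorm_withDensity _ hρ₀]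
  refine hsNorm_lt_top_of_abs_le (M := c * C) (fun x y => ?_) hg4
  rw [abs_of_nonneg (by have := hκ x y; positivity)]
  exact mul_mul_mul_le_mul_sq_mul_sq hc (hκ x y) (hκg x y) (hρ x) (hρ y)

variable {ι : Type*} {l : Filter ι} [l.IsCountablyGenerated] {c : ι → ℝ}

theorem tendsto_hsDist_mul_mul_mul (hκ : ∀ x y, 0 ≤ κ x y)
    (hκg : ∀ x y, κ x y ≤ C * g x * g y) (hg : ∀ x, 1 ≤ g x)
    (hg4 : ∫⁻ x, ENNReal.ofReal ((g x ^ 2) ^ 2) ∂μ ≠ ⊤) {r r' : ι → S → ℝ}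
    (hc : ∀ᶠ i in l, c i ∈ Set.Icc 1 2) (hr : ∀ᶠ i in l, ∀ x, r i x ∈ Set.Icc 0 (g x))
    (hr' : ∀ᶠ i in l, ∀ x, r' i x ∈ Set.Icc 0 (g x)) (hc₁ : Tendsto c l (𝓝 1))
    (hr₁ : ∀ x, Tendsto (fun i => r i x) l (𝓝 1))
    (hr'₁ : ∀ x, Tendsto (fun i => r' i x) l (𝓝 1)) :
    Tendsto (fun i => hsDist μ (fun x y => c i * κ x y * r i x * r' i y) κ) l (𝓝 0) := by
  refine tendsto_hsDist_zero_of_dominated (M := 2 * C) hg4 ?_ fun x y => ?_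
  · filter_upwards [hc, hr, hr'] with i hci hri hr'i x y
    exact abs_mul_mul_mul_sub_le hci (hκ x y) (hκg x y) (hg x) (hg y) (hri x) (hr'i y)
  · simpa using ((hc₁.mul_const (κ x y)).mul (hr₁ x)).mul (hr'₁ y)

theorem tendsto_opNorm_withDensity (hκ : ∀ x y, 0 ≤ κ x y)
    (hκg : ∀ x y, κ x y ≤ C * g x * g y) (hg : ∀ x, 1 ≤ g x)
    (hg4 : ∫⁻ x, ENNReal.ofReal ((g x ^ 2) ^ 2) ∂μ ≠ ⊤) {ρ : ι → S → ℝ}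
    (hc : ∀ᶠ i in l, c i ∈ Set.Icc 1 2) (hρ : ∀ᶠ i in l, ∀ x, √(ρ i x) ∈ Set.Icc 0 (g x))
    (hρ₀ : ∀ᶠ i in l, ∀ x, 0 < ρ i x) (hc₁ : Tendsto c l (𝓝 1))
    (hρ₁ : ∀ x, Tendsto (fun i => ρ i x) l (𝓝 1)) :
    Tendsto (fun i => opNorm (μ.withDensity fun x => ENNReal.ofReal (ρ i x))
      (fun x y => c i * κ x y)) l (𝓝 (opNorm μ κ)) := by
  have hκ_fin : opNorm μ κ ≠ ⊤ := ((opNorm_le_hsNorm κ).trans_lt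
    (hsNorm_lt_top_of_abs_le (fun x y => (abs_of_nonneg (hκ x y)).trans_le
      (le_mul_sq_mul_sq (hκ x y) (hκg x y) (hg x) (hg y))) hg4)).ne
  have hsqrt₁ : ∀ x, Tendsto (fun i => √(ρ i x)) l (𝓝 1) := fun x => by
    simpa using (hρ₁ x).sqrt
  refine (tendsto_opNorm_of_tendsto_hsDist hκ_fin (tendsto_hsDist_mul_mul_mul hκ hκg hg hg4
    hc hρ hρ hc₁ hsqrt₁ hsqrt₁)).congr' ?_
  filter_upwards [hρ₀] with i hi
  rw [opNorm_withDensity _ hi]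

end Kernel

theorem stmt19_general (S : Set ℕ)
    (μ : Measure S) [IsProbabilityMeasure μ]
    (κ : S → S → ℝ) (hκpos : ∀ x y, 0 < κ x y)
    (hκ2 : ∀ x, Integrable (fun y => κ x y ^ 2) μ)
    (ψ : S → ℝ) (hψ : ∀ x, ψ x = Real.sqrt (∫ y, κ x y ^ 2 ∂μ))
    (a : ℝ) (ha : 0 < a)
    (hexp : Integrable (fun x => Real.exp (a * ψ x)) μ)
    (T1 : S → ℝ) (hT1 : ∀ x, T1 x = ∫ y, κ x y ∂μ)
    (c₁ : ℝ) (hc₁ : 0 < c₁)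
    (hTT : ∀ x y, κ x y ≤ c₁ * T1 x * T1 y)
    (m : ℝ → ℝ) (hm : ∀ q, m q = (∫ x, Real.exp (q * T1 x) ∂μ)⁻¹)
    (μq : ℝ → Measure S)
    (hμq : ∀ q, μq q =
      μ.withDensity (fun x => ENNReal.ofReal (m q * Real.exp (q * T1 x)))) :
    (∀ q : ℝ, 0 < q → q < a / 4 → ∀ c : ℝ, 1 ≤ c →
      hsNorm (μq q) (fun x y => c * κ x y) < ⊤) ∧
    Tendsto
      (fun cq : ℝ × ℝ =>
        (∫⁻ x, ∫⁻ y, ENNReal.ofReal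
            ((cq.1 * κ x y * m cq.2 * Real.exp (cq.2 * T1 y) - κ x y) ^ 2) ∂μ ∂μ)
          ^ ((1 : ℝ) / 2))
      ((nhdsWithin 1 (Set.Ici 1)) ×ˢ (nhdsWithin 0 (Set.Ioi 0)))
      (nhds 0) ∧
    Tendsto
      (fun cq : ℝ × ℝ => opNorm (μq cq.2) (fun x y => cq.1 * κ x y))
      ((nhdsWithin 1 (Set.Ici 1)) ×ˢ (nhdsWithin 0 (Set.Ioi 0)))
      (nhds (opNorm μ κ)) := by
  have hκ : ∀ x y, 0 ≤ κ x y := fun x y => (hκpos x y).le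
  have hT : ∀ x, 0 ≤ T1 x := fun x => hT1 x ▸ integral_nonneg (hκ x)
  have hTψ : ∀ x, T1 x ≤ ψ x := fun x => by
    rw [hT1, hψ]
    exact integral_le_sqrt_integral_sq
      ((memLp_two_iff_integrable_sq (measurable_of_countable _).aestronglyMeasurable).2 (hκ2 x))
  set g : S → ℝ := fun x => Real.exp (a / 4 * ψ x)
  have hg : ∀ x, 1 ≤ g x := fun x => Real.one_le_exp (by have := (hT x).trans (hTψ x); positivity)
  have hκg : ∀ x y, κ x y ≤ c₁ * (a / 4)⁻¹ ^ 2 * g x * g y := fun x y =>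
    le_mul_exp_mul_exp (by positivity) hc₁.le (hT y) (hTψ x) (hTψ y) (hTT x y)
  have hg4 : ∫⁻ x, ENNReal.ofReal ((g x ^ 2) ^ 2) ∂μ ≠ ⊤ := by
    convert hexp.lintegral_lt_top.ne using 4 with x
    rw [← pow_mul, ← Real.exp_nat_mul]
    ring_nf
  have hTm : AEStronglyMeasurable T1 μ := (measurable_of_countable _).aestronglyMeasurable
  have hexpT : Integrable (fun x => Real.exp (a * T1 x)) μ :=
    integrable_exp_of_le (hTm.const_mul a) hexp fun x => by gcongr; exact hTψ x
  have hm₀ : ∀ q ∈ Set.Icc 0 (a / 4), m q ∈ Set.Ioc 0 1 := fun q hq =>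
    hm q ▸ inv_integral_exp_mul_mem_Ioc hTm hT hexpT ⟨hq.1, by linarith [hq.2]⟩
  have he : ∀ q ∈ Set.Icc 0 (a / 4), ∀ x, Real.exp (q * T1 x) ≤ g x := fun q hq x =>
    Real.exp_le_exp.2 (mul_le_mul hq.2 (hTψ x) (hT x) (by linarith))
  have hsqrt : ∀ q ∈ Set.Icc 0 (a / 4), ∀ x,
      √(m q * Real.exp (q * T1 x)) ∈ Set.Icc 0 (g x) := fun q hq x =>
    ⟨Real.sqrt_nonneg _, sqrt_mul_le_of_le (hm₀ q hq).2 (Real.exp_pos _).le (he q hq x) (hg x)⟩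
  set l := (𝓝[≥] (1 : ℝ)) ×ˢ (𝓝[>] (0 : ℝ))
  have hcl : ∀ᶠ cq in l, cq.1 ∈ Set.Icc 1 2 := Eventually.prod_inl (Icc_mem_nhdsGE one_lt_two) _
  have hql : ∀ᶠ cq in l, cq.2 ∈ Set.Icc 0 (a / 4) :=
    Eventually.prod_inr (mem_of_superset (Ioo_mem_nhdsGT (by positivity))
      Set.Ioo_subset_Icc_self) _
  have hc₁ : Tendsto (fun cq : ℝ × ℝ => cq.1) l (𝓝 1) := tendsto_fst.mono_right nhdsWithin_le_nhds
  have hm₁ : Tendsto (fun cq : ℝ × ℝ => m cq.2) l (𝓝 1) :=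
    ((tendsto_inv_integral_exp_mul_nhdsGT_zero hTm hT ha hexpT).congr fun q => (hm q).symm).comp
      tendsto_snd
  have he₁ : ∀ x, Tendsto (fun cq : ℝ × ℝ => Real.exp (cq.2 * T1 x)) l (𝓝 1) := fun x =>
    (tendsto_exp_mul_nhdsGT_zero (T1 x)).comp tendsto_snd
  refine ⟨fun q hq₀ hq c hc => ?_, ?_, ?_⟩
  · rw [hμq]
    exact hsNorm_withDensity_lt_top hκ hκg hg4 (by linarith) (hsqrt q ⟨hq₀.le, hq.le⟩)
      fun x => mul_nonneg (hm₀ q ⟨hq₀.le, hq.le⟩).1.le (Real.exp_pos _).le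
  · exact tendsto_hsDist_mul_mul_mul hκ hκg hg hg4 hcl
      (hql.mono fun cq hq x => ⟨(hm₀ cq.2 hq).1.le, (hm₀ cq.2 hq).2.trans (hg x)⟩)
      (hql.mono fun cq hq x => ⟨(Real.exp_pos _).le, he cq.2 hq x⟩) hc₁ (fun _ => hm₁) he₁
  · simp only [hμq]
    exact tendsto_opNorm_withDensity hκ hκg hg hg4 hcl (hql.mono fun cq hq => hsqrt cq.2 hq)
      (hql.mono fun cq hq x => mul_pos (hm₀ cq.2 hq).1 (Real.exp_pos _)) hc₁
      fun x => by simpa using hm₁.mul (he₁ x)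

theorem stmt19 (S : Set ℕ) (hS : ∀ n ∈ S, 0 < n)
    (μ : Measure S) [IsProbabilityMeasure μ]
    (κ : S → S → ℝ) (hκmeas : Measurable (Function.uncurry κ))
    (hκsymm : ∀ x y, κ x y = κ y x) (hκpos : ∀ x y, 0 < κ x y)
    (hκ2 : ∀ x, Integrable (fun y => κ x y ^ 2) μ)
    (ψ : S → ℝ) (hψ : ∀ x, ψ x = Real.sqrt (∫ y, κ x y ^ 2 ∂μ))
    (a : ℝ) (ha : 0 < a)
    (hexp : Integrable (fun x => Real.exp (a * ψ x)) μ)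
    (T1 : S → ℝ) (hT1 : ∀ x, T1 x = ∫ y, κ x y ∂μ)
    (c₁ : ℝ) (hc₁ : 0 < c₁)
    (hTT : ∀ x y, κ x y ≤ c₁ * T1 x * T1 y)
    (m : ℝ → ℝ) (hm : ∀ q, m q = (∫ x, Real.exp (q * T1 x) ∂μ)⁻¹)
    (μq : ℝ → Measure S)
    (hμq : ∀ q, μq q =
      μ.withDensity (fun x => ENNReal.ofReal (m q * Real.exp (q * T1 x)))) :
    (∀ q : ℝ, 0 < q → q < a / 4 → ∀ c : ℝ, 1 ≤ c →
      hsNorm (μq q) (fun x y => c * κ x y) < ⊤) ∧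
    Tendsto
      (fun cq : ℝ × ℝ =>
        (∫⁻ x, ∫⁻ y, ENNReal.ofReal
            ((cq.1 * κ x y * m cq.2 * Real.exp (cq.2 * T1 y) - κ x y) ^ 2) ∂μ ∂μ)
          ^ ((1 : ℝ) / 2))
      ((nhdsWithin 1 (Set.Ici 1)) ×ˢ (nhdsWithin 0 (Set.Ioi 0)))
      (nhds 0) ∧
    Tendsto
      (fun cq : ℝ × ℝ => opNorm (μq cq.2) (fun x y => cq.1 * κ x y))
      ((nhdsWithin 1 (Set.Ici 1)) ×ˢ (nhdsWithin 0 (Set.Ioi 0)))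
      (nhds (opNorm μ κ)) :=
  stmt19_general S μ κ hκpos hκ2 ψ hψ a ha hexp T1 hT1 c₁ hc₁ hTT m hm μq hμq
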